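/- Let A ⊆ B(H) be a subalgebra containing the identity operator I (not assumed commutative or norm-separable). If A is strongly reductive, then for every representation ρ of A on H that lies in the norm-closed unitary orbit of the identity representation of A on H, the algebra ρ(A) is reductive. -/

import Mathlib

open Filter Topology TopologicalSpace

noncomputable section

/-- `P` is an orthogonal projection: self-adjoint and idempotent. -/
def IsOrthoProjOp {H : Type*} [NormedAddCommGroup H] [InnerProductSpace ℂ H] [CompleteSpace H]
    (P : H →L[ℂ] H) : Prop :=
  IsSelfAdjoint P ∧ IsIdempotentElem P

/-- A set of operators is strongly reductive. -/
def StronglyReductiveSet {H : Type*} [NormedAddCommGroup H] [InnerProductSpace ℂ H]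
    [CompleteSpace H] (A : Set (H →L[ℂ] H)) : Prop :=
  ∀ P : ℕ → (H →L[ℂ] H), (∀ n, IsOrthoProjOp (P n)) →
    (∀ T ∈ A, Tendsto (fun n => ‖(1 - P n) * T * P n‖) atTop (𝓝 0)) →
    ∀ T ∈ A, Tendsto (fun n => ‖T * P n - P n * T‖) atTop (𝓝 0)

/-- The (closed) subspace `M` is invariant under the set of operators `S`. -/
def InvariantUnder {H : Type*} [NormedAddCommGroup H] [InnerProductSpace ℂ H]
    (S : Set (H →L[ℂ] H)) (M : Submodule ℂ H) : Prop :=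
  ∀ T ∈ S, ∀ x ∈ M, T x ∈ M

/-- The subspace `M` reduces the set of operators `S`. -/
def ReducesSet {H : Type*} [NormedAddCommGroup H] [InnerProductSpace ℂ H]
    (S : Set (H →L[ℂ] H)) (M : Submodule ℂ H) : Prop :=
  InvariantUnder S M ∧ InvariantUnder S Mᗮ

/-- A set of operators is reductive: every closed invariant subspace reduces it. -/
def IsReductiveSet {H : Type*} [NormedAddCommGroup H] [InnerProductSpace ℂ H]
    (S : Set (H →L[ℂ] H)) : Prop :=
  ∀ M : Submodule ℂ H, IsClosed (M : Set H) → InvariantUnder S M → ReducesSet S M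

/-- The representation `ρ` of `A` lies in the norm-closed unitary orbit of the identity
representation of `A`. -/
def InUnitaryOrbitOfId {H : Type*} [NormedAddCommGroup H] [InnerProductSpace ℂ H]
    [CompleteSpace H] (A : Subalgebra ℂ (H →L[ℂ] H)) (ρ : A →ₐ[ℂ] (H →L[ℂ] H)) : Prop :=
  ∃ U : ℕ → (H →L[ℂ] H), (∀ n, U n ∈ unitary (H →L[ℂ] H)) ∧
    ∀ T : A, Tendsto (fun n => ‖ρ T - U n * (T : H →L[ℂ] H) * star (U n)‖) atTop (𝓝 0)


/-!
Let `P` project onto a closed subspace invariant under `ρ(A)`, so that `(1 - P) ρ(T) P = 0`, and let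
`Uₙ T Uₙ* → ρ(T)`. The projections `Qₙ = Uₙ* P Uₙ` satisfy
`‖(1 - Qₙ) T Qₙ‖ = ‖(1 - P) Uₙ T Uₙ* P‖ → ‖(1 - P) ρ(T) P‖ = 0`, so strong reductivity gives
`‖T Qₙ - Qₙ T‖ = ‖Uₙ T Uₙ* P - P Uₙ T Uₙ*‖ → 0`. The limit of the right-hand side is
`‖ρ(T) P - P ρ(T)‖`, hence `ρ(T)` commutes with `P` and the orthogonal complement is invariant too.
-/

section UnitaryConjugation

variable {E : Type*} [Ring E] [StarRing E] {u : E}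

lemma one_sub_conj_mul_mul_conj_eq (hu : u ∈ unitary E) (a p : E) :
    (1 - star u * p * u) * a * (star u * p * u) =
      star u * ((1 - p) * (u * a * star u) * p) * u := by
  have h₁ : star u * u = 1 := Unitary.star_mul_self_of_mem hu
  simp only [mul_assoc, sub_mul, one_mul, mul_sub]
  simp only [← mul_assoc, h₁, one_mul]

lemma mul_conj_sub_conj_mul_eq (hu : u ∈ unitary E) (a p : E) :
    a * (star u * p * u) - star u * p * u * a =
      star u * (u * a * star u * p - p * (u * a * star u)) * u := by
  have h₁ : star u * u = 1 := Unitary.star_mul_self_of_mem hu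
  simp only [mul_assoc, sub_mul, mul_sub]
  simp only [← mul_assoc, h₁, one_mul]
  simp only [mul_assoc, mul_one]

lemma IsStarProjection.conj_of_mem_unitary {p : E} (hp : IsStarProjection p)
    (hu : u ∈ unitary E) : IsStarProjection (star u * p * u) := by
  simpa using hp.map (Unitary.conjStarAlgAut ℕ E (star ⟨u, hu⟩))

end UnitaryConjugation

section AsymptoticConjugation

variable {E ι : Type*} [NormedRing E] [StarRing E] [CStarRing E] {l : Filter ι}
  {u : ι → E} {a b p : E}

lemma norm_star_mul_mul_of_mem_unitary {v : E} (hv : v ∈ unitary E) (x : E) :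
    ‖star v * x * v‖ = ‖x‖ := by
  rw [CStarRing.norm_mul_mem_unitary _ hv, CStarRing.norm_mem_unitary_mul _ (Unitary.star_mem hv)]

lemma tendsto_norm_one_sub_conj_mul_mul_conj (hu : ∀ i, u i ∈ unitary E)
    (hab : Tendsto (fun i => u i * a * star (u i)) l (𝓝 b)) (hb : (1 - p) * b * p = 0) :
    Tendsto (fun i => ‖(1 - star (u i) * p * u i) * a * (star (u i) * p * u i)‖) l (𝓝 0) := by
  simp_rw [one_sub_conj_mul_mul_conj_eq (hu _), norm_star_mul_mul_of_mem_unitary (hu _)]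
  simpa [hb] using ((tendsto_const_nhds (x := 1 - p)).mul hab |>.mul_const p).norm

lemma commute_of_tendsto_norm_mul_conj_sub_conj_mul [l.NeBot] (hu : ∀ i, u i ∈ unitary E)
    (hab : Tendsto (fun i => u i * a * star (u i)) l (𝓝 b))
    (hcomm : Tendsto (fun i => ‖a * (star (u i) * p * u i) - star (u i) * p * u i * a‖) l (𝓝 0)) :
    Commute b p := by
  simp_rw [mul_conj_sub_conj_mul_eq (hu _), norm_star_mul_mul_of_mem_unitary (hu _)] at hcomm
  have hlim := ((hab.mul_const p).sub (hab.const_mul p)).norm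
  rw [Commute, SemiconjBy, ← sub_eq_zero, ← norm_eq_zero]
  exact tendsto_nhds_unique hlim hcomm

end AsymptoticConjugation

namespace Submodule

variable {𝕜 H : Type*} [RCLike 𝕜] [NormedAddCommGroup H] [InnerProductSpace 𝕜 H]
  (K : Submodule 𝕜 H) [K.HasOrthogonalProjection] {T : H →L[𝕜] H}

lemma one_sub_starProjection_mul_mul_starProjection_eq_zero (hT : ∀ x ∈ K, T x ∈ K) :
    (1 - K.starProjection) * T * K.starProjection = 0 := by
  ext x
  have hx : K.starProjection (T (K.starProjection x)) = T (K.starProjection x) :=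
    starProjection_eq_self_iff.mpr (hT _ (K.starProjection_apply_mem x))
  simp [hx]

lemma mapsTo_orthogonal_of_commute_starProjection (hT : Commute T K.starProjection) :
    ∀ x ∈ Kᗮ, T x ∈ Kᗮ := by
  intro x hx
  rw [← starProjection_apply_eq_zero_iff] at hx ⊢
  rw [← mul_apply_eq_comp, ← hT.eq, mul_apply_eq_comp, hx, map_zero]

end Submodule

theorem stmt5_general {H : Type*} [NormedAddCommGroup H] [InnerProductSpace ℂ H] [CompleteSpace H]
    (A : Subalgebra ℂ (H →L[ℂ] H))
    (h : StronglyReductiveSet (A : Set (H →L[ℂ] H))) :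
    ∀ ρ : A →ₐ[ℂ] (H →L[ℂ] H), InUnitaryOrbitOfId A ρ →
      IsReductiveSet (Set.range fun T : A => ρ T) := by
  rintro ρ ⟨U, hU, hUρ⟩ M hM hMρ
  have : CompleteSpace M := hM.completeSpace_coe
  have hconj (T : A) : Tendsto (fun n => U n * T * star (U n)) atTop (𝓝 (ρ T)) :=
    tendsto_iff_norm_sub_tendsto_zero.mpr (by simpa only [norm_sub_rev] using hUρ T)
  have hQ : ∀ n, IsOrthoProjOp (star (U n) * M.starProjection * U n) := fun n =>
    have hP := (isStarProjection_starProjection (U := M)).conj_of_mem_unitary (hU n)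
    ⟨hP.isSelfAdjoint, hP.isIdempotentElem⟩
  have hcomm := h _ hQ <| by
    intro T hT
    lift T to A using hT
    exact tendsto_norm_one_sub_conj_mul_mul_conj hU (hconj T)
      (M.one_sub_starProjection_mul_mul_starProjection_eq_zero (hMρ _ ⟨T, rfl⟩))
  refine ⟨hMρ, ?_⟩
  rintro _ ⟨T, rfl⟩
  exact M.mapsTo_orthogonal_of_commute_starProjection
    (commute_of_tendsto_norm_mul_conj_sub_conj_mul hU (hconj T) (hcomm T T.2))

theorem stmt5 {H : Type*} [NormedAddCommGroup H] [InnerProductSpace ℂ H] [CompleteSpace H]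
    [SeparableSpace H] (hinf : ¬ FiniteDimensional ℂ H)
    (A : Subalgebra ℂ (H →L[ℂ] H))
    (h : StronglyReductiveSet (A : Set (H →L[ℂ] H))) :
    ∀ ρ : A →ₐ[ℂ] (H →L[ℂ] H), InUnitaryOrbitOfId A ρ →
      IsReductiveSet (Set.range fun T : A => ρ T) :=
  stmt5_general A h
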